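/- Let ε ≠ 0, let h > −5/2 and set m = √((ε²+1)(2h+5)). Define the rational parametrization P_h(t) = (P_{1,h}(t), P_{2,h}(t)) with common denominator Q(t) = (ε²+1)t² + (2ε²+2)t − ε²m² + 2ε² + 2, P_{1,h}(t) = ((ε²+1)t² − 2(ε²+1)(m−1)t + ε²m² − 2ε²m + 2ε² − 2m + 2)/Q(t), P_{2,h}(t) = −((ε²+1)(m−1)t² − 2((m²+1)ε²+1)t + (m+1)(ε²m² − 2ε² − 2))/Q(t), and its inverse P_h^{-1}(x,y) = ((ε²(m²−2)−2)x + (ε²(m−1)−1)y + ε²(3−2m) − m + 3) / ((ε²(m+1)+1)x + (ε²+1)y − 2ε² + m − 2). Then for every t ∈ ℝ at which all the intervening denominators are nonzero, P_h^{-1}(Φ_ε(P_h(t))) = (at+b)/(t+d), where a = (εm − ε + 1)/ε, b = −(ε²(m²−2m+2) − 2m + 2)/(ε²+1), and d = −(εm − ε − 1)/ε. -/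
import Mathlib


/-- Denominator of the Kahan–Hirota–Kimura map `Φ_ε` of the system
`ẋ = x(x+y-2)`, `ẏ = -x(2x+y-3)`. -/
noncomputable def Dps (ε x y : ℝ) : ℝ :=
  2 * ε ^ 2 * x ^ 2 - ε * (ε + 1) * x - ε * y + 2 * ε + 1

/-- The Kahan–Hirota–Kimura map `Φ_ε` of the system `ẋ = x(x+y-2)`, `ẏ = -x(2x+y-3)`. -/
noncomputable def Phips (ε : ℝ) (q : ℝ × ℝ) : ℝ × ℝ :=
  ((ε * (ε + 1) * q.1 ^ 2 + ε * q.1 * q.2 + (1 - 2 * ε) * q.1) / Dps ε q.1 q.2,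
   (ε * (2 * ε - 4) * q.1 ^ 2 - ε * (ε + 3) * q.1 * q.2 + 6 * ε * q.1 - ε * q.2 ^ 2
      + (2 * ε + 1) * q.2) / Dps ε q.1 q.2)

/-- The invariant conic `C_h` of `Φ_ε`. -/
def Cps (ε h : ℝ) : Set (ℝ × ℝ) :=
  {q : ℝ × ℝ | (2 - 5 * ε ^ 2 - 2 * ε ^ 2 * h) * q.1 ^ 2 + 2 * q.1 * q.2 + q.2 ^ 2
      - 6 * q.1 - 4 * q.2 - 2 * h = 0}

/-- Common denominator of the proper parametrization `P_h` of the conic `C_h`. -/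
noncomputable def Qden (ε m t : ℝ) : ℝ :=
  (ε ^ 2 + 1) * t ^ 2 + (2 * ε ^ 2 + 2) * t - ε ^ 2 * m ^ 2 + 2 * ε ^ 2 + 2

/-- First component of the proper parametrization `P_h` of the conic `C_h`. -/
noncomputable def P1h (ε m t : ℝ) : ℝ :=
  ((ε ^ 2 + 1) * t ^ 2 - 2 * (ε ^ 2 + 1) * (m - 1) * t + ε ^ 2 * m ^ 2 - 2 * ε ^ 2 * m
      + 2 * ε ^ 2 - 2 * m + 2) / Qden ε m t

/-- Second component of the proper parametrization `P_h` of the conic `C_h`. -/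
noncomputable def P2h (ε m t : ℝ) : ℝ :=
  -(((ε ^ 2 + 1) * (m - 1) * t ^ 2 - 2 * ((m ^ 2 + 1) * ε ^ 2 + 1) * t
      + (m + 1) * (ε ^ 2 * m ^ 2 - 2 * ε ^ 2 - 2))) / Qden ε m t

/-- Numerator of the inverse parametrization `P_h⁻¹`. -/
noncomputable def PinvNum (ε m x y : ℝ) : ℝ :=
  (ε ^ 2 * (m ^ 2 - 2) - 2) * x + (ε ^ 2 * (m - 1) - 1) * y + ε ^ 2 * (3 - 2 * m) - m + 3

/-- Denominator of the inverse parametrization `P_h⁻¹`. -/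
noncomputable def PinvDen (ε m x y : ℝ) : ℝ :=
  (ε ^ 2 * (m + 1) + 1) * x + (ε ^ 2 + 1) * y - 2 * ε ^ 2 + m - 2

set_option maxHeartbeats 4000000 in
/-- On each conic `C_h`, the KHK map `Φ_ε` is conjugated, via the proper
parametrization `P_h`, to the Möbius map `t ↦ (a t + b)/(t + d)` with
`a = (εm - ε + 1)/ε`, `b = -(ε²(m² - 2m + 2) - 2m + 2)/(ε² + 1)` and
`d = -(εm - ε - 1)/ε`, where `m = √((ε²+1)(2h+5))`. -/
theorem stmt_4 (ε h : ℝ) (hε : ε ≠ 0) (hh : -5 / 2 < h)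
    (m : ℝ) (hm : m = Real.sqrt ((ε ^ 2 + 1) * (2 * h + 5)))
    (t : ℝ)
    (hQ : Qden ε m t ≠ 0)
    (hD : Dps ε (P1h ε m t) (P2h ε m t) ≠ 0)
    (hPd : PinvDen ε m (Phips ε (P1h ε m t, P2h ε m t)).1
      (Phips ε (P1h ε m t, P2h ε m t)).2 ≠ 0)
    (hd : t + (-(ε * m - ε - 1) / ε) ≠ 0) :
    PinvNum ε m (Phips ε (P1h ε m t, P2h ε m t)).1 (Phips ε (P1h ε m t, P2h ε m t)).2 /
      PinvDen ε m (Phips ε (P1h ε m t, P2h ε m t)).1 (Phips ε (P1h ε m t, P2h ε m t)).2 =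
    (((ε * m - ε + 1) / ε) * t + (-(ε ^ 2 * (m ^ 2 - 2 * m + 2) - 2 * m + 2) / (ε ^ 2 + 1))) /
      (t + (-(ε * m - ε - 1) / ε)) := by
  have he2 : (ε:ℝ)^2+1 ≠ 0 := by positivity
  set q := (ε ^ 2 + 1) * t ^ 2 + (2 * ε ^ 2 + 2) * t - ε ^ 2 * m ^ 2 + 2 * ε ^ 2 + 2 with hq
  have hQ' : q ≠ 0 := hQ
  set A := (ε ^ 2 + 1) * t ^ 2 - 2 * (ε ^ 2 + 1) * (m - 1) * t + ε ^ 2 * m ^ 2 - 2 * ε ^ 2 * m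
      + 2 * ε ^ 2 - 2 * m + 2 with hA
  set B := -(((ε ^ 2 + 1) * (m - 1) * t ^ 2 - 2 * ((m ^ 2 + 1) * ε ^ 2 + 1) * t
      + (m + 1) * (ε ^ 2 * m ^ 2 - 2 * ε ^ 2 - 2))) with hB
  have hx : P1h ε m t = A / q := rfl
  have hy : P2h ε m t = B / q := rfl
  clear_value q A B
  obtain ⟨Dn, hDn⟩ : ∃ D : ℝ, D = 2 * ε ^ 2 * A ^ 2 - ε * (ε + 1) * A * q - ε * B * q
      + (2 * ε + 1) * q ^ 2 := ⟨_, rfl⟩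
  have hDq : Dps ε (P1h ε m t) (P2h ε m t) = Dn / q ^ 2 := by
    rw [hx, hy, Dps, hDn]; field_simp; ring
  have hDn0 : Dn ≠ 0 := by
    intro h0; apply hD; rw [hDq, h0, zero_div]
  obtain ⟨Nx, hNx⟩ : ∃ N : ℝ, N = ε * (ε + 1) * A ^ 2 + ε * A * B + (1 - 2 * ε) * A * q :=
    ⟨_, rfl⟩
  obtain ⟨Ny, hNy⟩ : ∃ N : ℝ, N = ε * (2 * ε - 4) * A ^ 2 - ε * (ε + 3) * A * B
      + 6 * ε * A * q - ε * B ^ 2 + (2 * ε + 1) * B * q := ⟨_, rfl⟩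
  have hq2 : q ^ 2 ≠ 0 := pow_ne_zero _ hQ'
  have hX : (Phips ε (P1h ε m t, P2h ε m t)).1 = Nx / Dn := by
    show (ε * (ε + 1) * (P1h ε m t) ^ 2 + ε * (P1h ε m t) * (P2h ε m t)
        + (1 - 2 * ε) * (P1h ε m t)) / Dps ε (P1h ε m t) (P2h ε m t) = Nx / Dn
    rw [hDq, hx, hy, hNx]; field_simp
  have hY : (Phips ε (P1h ε m t, P2h ε m t)).2 = Ny / Dn := by
    show (ε * (2 * ε - 4) * (P1h ε m t) ^ 2 - ε * (ε + 3) * (P1h ε m t) * (P2h ε m t)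
        + 6 * ε * (P1h ε m t) - ε * (P2h ε m t) ^ 2 + (2 * ε + 1) * (P2h ε m t))
        / Dps ε (P1h ε m t) (P2h ε m t) = Ny / Dn
    rw [hDq, hx, hy, hNy]; field_simp
  rw [div_eq_div_iff hPd hd]
  rw [PinvNum, PinvDen, hX, hY]
  field_simp
  rw [hNx, hNy, hDn, hA, hB, hq]
  ring
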